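/- Let P be a finite nonempty type, E = EuclideanSpace ℝ (Fin n), f : P → E → E a family of continuously differentiable vector fields, and τd > 0 a dwell time. A set I ⊆ E is invariant for slow switching with dwell time τd (i.e., for every switching signal (τ, σ) with τ (i+1) − τ i ≥ τd for all i, every T ≥ 0, and every solution φ of the switched system from some ω ∈ I following (τ, σ) up to time T, one has φ T ∈ I) if and only if I is invariant for each constituent ODE individually (i.e., for every p : P, every t ≥ 0, and every φ : ℝ → E with φ 0 ∈ I that has derivative f p (φ s) within Set.Icc 0 t at every s ∈ Set.Icc 0 t, one has φ t ∈ I). -/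

import Mathlib

/-- `(τ, σ)` is a switching signal. -/
def IsSwitchingSignal (P : Type*) (τ : ℕ → ℝ) (σ : ℕ → P) : Prop :=
  StrictMono τ ∧ τ 0 = 0 ∧ Filter.Tendsto τ Filter.atTop Filter.atTop

/-- `φ` is a solution of the switched system `f` from `ω` following `(τ, σ)` up to time `T`. -/
def IsSwitchedSolution {n : ℕ} {P : Type*}
    (f : P → EuclideanSpace ℝ (Fin n) → EuclideanSpace ℝ (Fin n))
    (τ : ℕ → ℝ) (σ : ℕ → P) (ω : EuclideanSpace ℝ (Fin n)) (T : ℝ)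
    (φ : ℝ → EuclideanSpace ℝ (Fin n)) : Prop :=
  Continuous φ ∧ φ 0 = ω ∧
    ∀ i : ℕ, 1 ≤ i → ∀ s ∈ Set.Icc (τ (i - 1)) (τ i) ∩ Set.Icc (0 : ℝ) T,
      HasDerivWithinAt φ (f (σ i) (φ s)) (Set.Icc (τ (i - 1)) (τ i)) s

/-!
Switching invariance gives invariance under each mode `p`: a solution `φ` of mode `p` on
`[0, t]` is extended past `t` by its tangent line, and then follows the constant signal `p`
with switching times `i * c` for any `c > t` exceeding the dwell time: up to time `t`, the
switched solution only sees the derivative of the extension from the right at `t`.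
Conversely, a solution of the switched system follows a single mode on each interval
`[τ (i - 1), τ i]`, so invariance for every mode propagates membership in `I` from one
switching time to the next.
-/

open Set

section ODE

variable {E : Type*} [NormedAddCommGroup E] [NormedSpace ℝ E]

def IsODEInvariant (v : E → E) (I : Set E) : Prop :=
  ∀ t : ℝ, 0 ≤ t → ∀ φ : ℝ → E, φ 0 ∈ I →
    (∀ s ∈ Icc (0 : ℝ) t, HasDerivWithinAt φ (v (φ s)) (Icc (0 : ℝ) t) s) → φ t ∈ I

theorem IsODEInvariant.mem_of_hasDerivWithinAt {v : E → E} {I : Set E} (hI : IsODEInvariant v I)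
    {φ : ℝ → E} {a b : ℝ} (hab : a ≤ b) (ha : φ a ∈ I)
    (hφ : ∀ s ∈ Icc a b, HasDerivWithinAt φ (v (φ s)) (Icc a b) s) : φ b ∈ I := by
  have hshift : ∀ s ∈ Icc 0 (b - a),
      HasDerivWithinAt (fun x => φ (x + a)) (v (φ (s + a))) (Icc 0 (b - a)) s := by
    intro s hs
    have hmaps : MapsTo (· + a) (Icc 0 (b - a)) (Icc a b) := fun x hx =>
      ⟨by linarith [hx.1], by linarith [hx.2]⟩
    simpa [Function.comp_def] using (hφ (s + a) (hmaps hs)).scomp s ((hasDerivWithinAt_id s _).add_const a) hmaps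
  simpa using hI (b - a) (sub_nonneg.2 hab) (fun x => φ (x + a)) (by simpa using ha) hshift

theorem exists_continuous_extension_hasDerivWithinAt {v : E → E} {φ : ℝ → E} {a b c : ℝ}
    (hab : a ≤ b) (hbc : b ≤ c) (hφ : ∀ s ∈ Icc a b, HasDerivWithinAt φ (v (φ s)) (Icc a b) s) :
    ∃ ψ : ℝ → E, Continuous ψ ∧ EqOn ψ φ (Icc a b) ∧
      ∀ s ∈ Icc a b, HasDerivWithinAt ψ (v (ψ s)) (Icc a c) s := by
  set ψ : ℝ → E := fun s =>
    if s ≤ b then φ (projIcc a b hab s) else φ b + (s - b) • v (φ b)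
  have hψφ : EqOn ψ φ (Icc a b) := fun s hs => by simp [ψ, hs.2, projIcc_of_mem hab hs]
  have hψ_tangent : EqOn ψ (fun s => φ b + (s - b) • v (φ b)) (Icc b c) := by
    intro s hs
    rcases hs.1.eq_or_lt with rfl | hbs
    · simp [ψ]
    · simp [ψ, not_le.2 hbs]
  have hφc : ContinuousOn φ (Icc a b) := fun s hs => (hφ s hs).continuousWithinAt
  have hψc : Continuous ψ := by
    refine Continuous.if_le ?_ (by fun_prop) continuous_id continuous_const ?_
    · exact hφc.comp_continuous (continuous_subtype_val.comp continuous_projIcc)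
        fun s => (projIcc a b hab s).2
    · intro s hs
      simp [hs]
  refine ⟨ψ, hψc, hψφ, fun s hs => ?_⟩
  rw [← Icc_union_Icc_eq_Icc hab hbc, hψφ hs]
  refine ((hφ s hs).congr (fun x hx => hψφ hx) (hψφ hs)).union ?_
  rcases hs.2.eq_or_lt with rfl | hsb
  · have hline : HasDerivWithinAt (fun x => φ s + (x - s) • v (φ s)) (v (φ s)) (Icc s c) s := by
      simpa using (((hasDerivWithinAt_id s _).sub_const s).smul_const (v (φ s))).const_add (φ s)
    exact hline.congr hψ_tangent (hψ_tangent ⟨le_rfl, hbc⟩)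
  · exact HasFDerivWithinAt.of_notMem_closure (by simp [closure_Icc, hsb])

end ODE

theorem isSwitchingSignal_natCast_mul {P : Type*} (σ : ℕ → P) {c : ℝ} (hc : 0 < c) :
    IsSwitchingSignal P (fun i => i * c) σ :=
  ⟨fun _ _ hij => mul_lt_mul_of_pos_right (Nat.cast_lt.2 hij) hc, by simp,
    tendsto_natCast_atTop_atTop.atTop_mul_const hc⟩

section Switched

variable {n : ℕ} {P : Type*} {f : P → EuclideanSpace ℝ (Fin n) → EuclideanSpace ℝ (Fin n)}

def IsSlowSwitchingInvariant (f : P → EuclideanSpace ℝ (Fin n) → EuclideanSpace ℝ (Fin n))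
    (τd : ℝ) (I : Set (EuclideanSpace ℝ (Fin n))) : Prop :=
  ∀ (τ : ℕ → ℝ) (σ : ℕ → P), IsSwitchingSignal P τ σ →
    (∀ i : ℕ, τd ≤ τ (i + 1) - τ i) →
    ∀ T : ℝ, 0 ≤ T → ∀ ω ∈ I, ∀ φ : ℝ → EuclideanSpace ℝ (Fin n),
      IsSwitchedSolution f τ σ ω T φ → φ T ∈ I

theorem isSwitchedSolution_const_of_lt (p : P) {φ : ℝ → EuclideanSpace ℝ (Fin n)} {T c : ℝ}
    (hTc : T < c) (hφ : Continuous φ)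
    (hder : ∀ s ∈ Icc 0 T, HasDerivWithinAt φ (f p (φ s)) (Icc 0 c) s) :
    IsSwitchedSolution f (fun i => i * c) (fun _ => p) (φ 0) T φ := by
  refine ⟨hφ, rfl, fun i hi s hs => ?_⟩
  obtain _ | _ | i := i
  · omega
  · simpa using hder s hs.2
  · have hs₁ : ((i + 1 : ℕ) : ℝ) * c ≤ s := by simpa using hs.1.1
    have hc : 0 < c := by linarith [hs.2.1, hs.2.2]
    have : c ≤ ((i + 1 : ℕ) : ℝ) * c := le_mul_of_one_le_left hc.le (by simp)
    linarith [hs.2.2]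

theorem IsSwitchedSolution.mem_of_isODEInvariant {I : Set (EuclideanSpace ℝ (Fin n))}
    {τ : ℕ → ℝ} {σ : ℕ → P} {ω : EuclideanSpace ℝ (Fin n)} {T : ℝ}
    {φ : ℝ → EuclideanSpace ℝ (Fin n)} (hφ : IsSwitchedSolution f τ σ ω T φ)
    (hI : ∀ p, IsODEInvariant (f p) I) (hsig : IsSwitchingSignal P τ σ) (hT : 0 ≤ T)
    (hω : ω ∈ I) : φ T ∈ I := by
  obtain ⟨hmono, hτ0, hτ_top⟩ := hsig
  have hτ_nonneg : ∀ i, 0 ≤ τ i := fun i => hτ0 ▸ hmono.monotone i.zero_le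
  have hmem : ∀ i, ∀ u ∈ Icc 0 T, u ≤ τ i → φ u ∈ I := by
    intro i
    induction i with
    | zero =>
      intro u hu huτ
      rw [le_antisymm (hτ0 ▸ huτ) hu.1, hφ.2.1]
      exact hω
    | succ i ih =>
      intro u hu huτ
      rcases le_or_gt u (τ i) with hui | hiu
      · exact ih u hu hui
      refine (hI (σ (i + 1))).mem_of_hasDerivWithinAt hiu.le
        (ih (τ i) ⟨hτ_nonneg i, hiu.le.trans hu.2⟩ le_rfl) fun s hs => ?_
      have hsub : Icc (τ i) u ⊆ Icc (τ i) (τ (i + 1)) := Icc_subset_Icc_right huτ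
      have hder := hφ.2.2 (i + 1) i.succ_pos s
        ⟨hsub hs, hτ_nonneg i |>.trans hs.1, hs.2.trans hu.2⟩
      simp only [Nat.add_sub_cancel] at hder
      exact hder.mono hsub
  obtain ⟨i, hi⟩ := (hτ_top.eventually_ge_atTop T).exists
  exact hmem i T ⟨hT, le_rfl⟩ hi

theorem IsSlowSwitchingInvariant.isODEInvariant {τd : ℝ} {I : Set (EuclideanSpace ℝ (Fin n))}
    (hI : IsSlowSwitchingInvariant f τd I) (p : P) : IsODEInvariant (f p) I := by
  intro t ht φ hφ0 hφ
  set c := max τd (t + 1)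
  have htc : t < c := lt_max_of_lt_right (lt_add_one t)
  obtain ⟨ψ, hψc, hψφ, hψ⟩ := exists_continuous_extension_hasDerivWithinAt ht htc.le hφ
  have hdwell : ∀ i : ℕ, τd ≤ ((i + 1 : ℕ) : ℝ) * c - i * c := fun i => by
    push_cast
    linarith [le_max_left τd (t + 1)]
  have hψt := hI _ _ (isSwitchingSignal_natCast_mul _ (ht.trans_lt htc)) hdwell t ht (ψ 0)
    (by rwa [hψφ ⟨le_rfl, ht⟩]) ψ (isSwitchedSolution_const_of_lt p htc hψc hψ)
  rwa [hψφ ⟨ht, le_rfl⟩] at hψt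

end Switched

theorem slow_switching_invariance_general {n : ℕ} {P : Type*}
    (f : P → EuclideanSpace ℝ (Fin n) → EuclideanSpace ℝ (Fin n))
    (τd : ℝ) (I : Set (EuclideanSpace ℝ (Fin n))) :
    (∀ (τ : ℕ → ℝ) (σ : ℕ → P), IsSwitchingSignal P τ σ →
      (∀ i : ℕ, τd ≤ τ (i + 1) - τ i) →
      ∀ T : ℝ, 0 ≤ T → ∀ ω ∈ I, ∀ φ : ℝ → EuclideanSpace ℝ (Fin n),
        IsSwitchedSolution f τ σ ω T φ → φ T ∈ I) ↔
    (∀ p : P, ∀ t : ℝ, 0 ≤ t → ∀ φ : ℝ → EuclideanSpace ℝ (Fin n), φ 0 ∈ I →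
      (∀ s ∈ Set.Icc (0 : ℝ) t, HasDerivWithinAt φ (f p (φ s)) (Set.Icc (0 : ℝ) t) s) →
      φ t ∈ I) :=
  ⟨fun hI p => IsSlowSwitchingInvariant.isODEInvariant hI p,
    fun hI _ _ hsig _ _ hT _ hω _ hφ => hφ.mem_of_isODEInvariant hI hsig hT hω⟩

theorem slow_switching_invariance {n : ℕ} {P : Type*} [Fintype P] [Nonempty P]
    (f : P → EuclideanSpace ℝ (Fin n) → EuclideanSpace ℝ (Fin n))
    (hf : ∀ p, ContDiff ℝ 1 (f p))
    (τd : ℝ) (hτd : 0 < τd) (I : Set (EuclideanSpace ℝ (Fin n))) :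
    (∀ (τ : ℕ → ℝ) (σ : ℕ → P), IsSwitchingSignal P τ σ →
      (∀ i : ℕ, τd ≤ τ (i + 1) - τ i) →
      ∀ T : ℝ, 0 ≤ T → ∀ ω ∈ I, ∀ φ : ℝ → EuclideanSpace ℝ (Fin n),
        IsSwitchedSolution f τ σ ω T φ → φ T ∈ I) ↔
    (∀ p : P, ∀ t : ℝ, 0 ≤ t → ∀ φ : ℝ → EuclideanSpace ℝ (Fin n), φ 0 ∈ I →
      (∀ s ∈ Set.Icc (0 : ℝ) t, HasDerivWithinAt φ (f p (φ s)) (Set.Icc (0 : ℝ) t) s) →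
      φ t ∈ I) :=
  slow_switching_invariance_general f τd I
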